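/- arXiv:1909.01451 — 4 statements merged into one kernel-verified Lean document; each statement's English description precedes it below -/
import Mathlib

section
/- There exists a universal constant C > 0 such that the following holds. Let Ω be a Jordan subdomain of the unit disk 𝔻 containing 0, with ∂Ω ⊆ {z : |z| ≥ 1 - ε} for some ε < 1/2. Let h : Ω → 𝔻 be the Riemann mapping normalized by h(0)=0 and h'(0)>0. Then |h^{-1}(z) - z| < Cε for all |z| < 1/2. -/
open Complex Set Metric Topology

/-- Schwarz lemma for the inverse map, proved via the maximum principle applied to
`(dslope h 0)⁻¹` on preimages of closed disks. -/
lemma aux_inv_schwarz {Ω : Set ℂ} (hΩo : IsOpen Ω) (hΩc : IsConnected Ω)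
    (h0Ω : (0:ℂ) ∈ Ω) (hΩb : Ω ⊆ ball (0:ℂ) 1) {h : ℂ → ℂ}
    (hdiff : DifferentiableOn ℂ h Ω) (hbij : Set.BijOn h Ω (ball (0:ℂ) 1))
    (hh0 : h 0 = 0) (hd0 : deriv h 0 ≠ 0) :
    ∀ w ∈ Ω, ‖(dslope h 0 w)⁻¹‖ ≤ 1 := by
  have hinj := hbij.injOn
  have hΩnhds : Ω ∈ 𝓝 (0:ℂ) := hΩo.mem_nhds h0Ω
  have hd : DifferentiableOn ℂ (dslope h 0) Ω :=
    (Complex.differentiableOn_dslope hΩnhds).mpr hdiff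
  have hdne : ∀ w ∈ Ω, dslope h 0 w ≠ 0 := by
    intro w hw
    rcases eq_or_ne w 0 with rfl | hne
    · rwa [dslope_same]
    · rw [dslope_of_ne _ hne, slope_def_field, hh0, sub_zero, sub_zero]
      refine div_ne_zero (fun hz => hne ?_) hne
      exact hinj hw h0Ω (by rw [hz, hh0])
  have hkdiff : DifferentiableOn ℂ (fun w => (dslope h 0 w)⁻¹) Ω := hd.inv hdne
  -- open mapping
  have hanal : AnalyticOnNhd ℂ h Ω := hdiff.analyticOnNhd hΩo
  have hopen : ∀ s ⊆ Ω, IsOpen s → IsOpen (h '' s) := by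
    rcases hanal.is_constant_or_isOpen hΩc.isPreconnected with ⟨v, hv⟩ | hO
    · exfalso
      have h1 : (1/2 : ℂ) ∈ ball (0:ℂ) 1 := by
        rw [mem_ball_zero_iff]
        rw [show ((1:ℂ)/2) = (((1:ℝ)/2 : ℝ):ℂ) by norm_num, Complex.norm_real, Real.norm_eq_abs,
          abs_of_pos (by norm_num : (0:ℝ) < 1/2)]
        norm_num
      obtain ⟨x, hx, hhx⟩ := hbij.surjOn h1
      have e1 := hv x hx
      have e2 := hv 0 h0Ω
      rw [hhx] at e1
      rw [hh0] at e2
      rw [← e2] at e1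
      norm_num at e1
    · exact hO
  set ψ := Function.invFunOn h Ω with hψdef
  have hinv : Set.InvOn ψ h Ω (ball (0:ℂ) 1) := hbij.invOn_invFunOn
  have hψmem : Set.MapsTo ψ (ball (0:ℂ) 1) Ω := hbij.surjOn.mapsTo_invFunOn
  have hψcont : ContinuousOn ψ (ball (0:ℂ) 1) := by
    rw [_root_.continuousOn_iff']
    intro t ht
    refine ⟨h '' (t ∩ Ω), hopen _ inter_subset_right (ht.inter hΩo), ?_⟩
    ext ζ
    constructor
    · rintro ⟨hζt, hζb⟩
      exact ⟨⟨ψ ζ, ⟨hζt, hψmem hζb⟩, hinv.2 hζb⟩, hζb⟩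
    · rintro ⟨⟨x, ⟨hxt, hxΩ⟩, rfl⟩, hb⟩
      refine ⟨?_, hb⟩
      rw [mem_preimage, hinv.1 hxΩ]
      exact hxt
  intro w hw
  by_contra hgt
  push_neg at hgt
  have hkpos : (0:ℝ) < ‖(dslope h 0 w)⁻¹‖ := lt_trans one_pos hgt
  have hb1 : ‖h w‖ < 1 := mem_ball_zero_iff.mp (hbij.mapsTo hw)
  have hinvlt1 : ‖(dslope h 0 w)⁻¹‖⁻¹ < 1 := by
    rw [inv_lt_one_iff₀]; right; exact hgt
  obtain ⟨r, hr1, hr2⟩ := exists_between (max_lt hb1 hinvlt1)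
  have hrpos : 0 < r :=
    (inv_pos.mpr hkpos).trans (lt_of_le_of_lt (le_max_right _ _) hr1)
  set U : Set ℂ := Ω ∩ h ⁻¹' (ball (0:ℂ) r) with hUdef
  have hUopen : IsOpen U := hdiff.continuousOn.isOpen_inter_preimage hΩo isOpen_ball
  have hKcomp : IsCompact (ψ '' closedBall (0:ℂ) r) :=
    (isCompact_closedBall _ _).image_of_continuousOn
      (hψcont.mono (closedBall_subset_ball hr2))
  have hKΩ : ψ '' closedBall (0:ℂ) r ⊆ Ω := by
    rintro _ ⟨ζ, hζ, rfl⟩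
    exact hψmem (closedBall_subset_ball hr2 hζ)
  have hUK : U ⊆ ψ '' closedBall (0:ℂ) r := by
    rintro x ⟨hxΩ, hxb⟩
    exact ⟨h x, ball_subset_closedBall hxb, hinv.1 hxΩ⟩
  have hclU : closure U ⊆ ψ '' closedBall (0:ℂ) r := closure_minimal hUK hKcomp.isClosed
  have hclUΩ : closure U ⊆ Ω := hclU.trans hKΩ
  have hUb : Bornology.IsBounded U :=
    (Metric.isBounded_ball (x := (0:ℂ)) (r := 1)).subset fun x hx => hΩb hx.1
  have hdcc : DiffContOnCl ℂ (fun w => (dslope h 0 w)⁻¹) U :=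
    ⟨hkdiff.mono inter_subset_left, hkdiff.continuousOn.mono hclUΩ⟩
  have hfr : ∀ z ∈ frontier U, ‖(dslope h 0 z)⁻¹‖ ≤ 1 / r := by
    intro z hz
    rw [hUopen.frontier_eq] at hz
    obtain ⟨hzcl, hznU⟩ := hz
    have hzΩ : z ∈ Ω := hclUΩ hzcl
    obtain ⟨ζ, hζ, hzψ⟩ := hclU hzcl
    have hhz : h z = ζ := by rw [← hzψ]; exact hinv.2 (closedBall_subset_ball hr2 hζ)
    have hle : ‖h z‖ ≤ r := by rw [hhz]; exact mem_closedBall_zero_iff.mp hζ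
    have hge : r ≤ ‖h z‖ := by
      by_contra hlt
      push_neg at hlt
      exact hznU ⟨hzΩ, mem_ball_zero_iff.mpr hlt⟩
    have heq : ‖h z‖ = r := le_antisymm hle hge
    have hzne : z ≠ 0 := by
      intro hz0
      rw [hz0, hh0, norm_zero] at heq
      exact hrpos.ne heq
    rw [dslope_of_ne _ hzne, slope_def_field, hh0, sub_zero, sub_zero, inv_div, norm_div, heq]
    have hz1 : ‖z‖ < 1 := mem_ball_zero_iff.mp (hΩb hzΩ)
    gcongr
  have hwU : w ∈ U :=
    ⟨hw, mem_ball_zero_iff.mpr (lt_of_le_of_lt (le_max_left _ _) hr1)⟩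
  have hmain := Complex.norm_le_of_forall_mem_frontier_norm_le hUb hdcc hfr
    (subset_closure hwU)
  have h2 : 1 / r < ‖(dslope h 0 w)⁻¹‖ := by
    rw [div_lt_iff₀ hrpos]
    have hlt : ‖(dslope h 0 w)⁻¹‖⁻¹ < r := lt_of_le_of_lt (le_max_right _ _) hr1
    have hmm : ‖(dslope h 0 w)⁻¹‖ * ‖(dslope h 0 w)⁻¹‖⁻¹ = 1 := mul_inv_cancel₀ hkpos.ne'
    nlinarith
  linarith
set_option maxHeartbeats 1600000 in
/-- **Warschawski-type lemma.**
There is a universal constant `C > 0` such that: if `Ω` is a Jordan (open, connected,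
simply connected) subdomain of the unit disk containing `0`, with `∂Ω ⊆ {|z| ≥ 1-ε}`
for some `0 < ε < 1/2`, and `h : Ω → 𝔻` is the Riemann mapping normalized by `h(0) = 0`,
`h'(0) > 0`, then `|h⁻¹(z) - z| < C·ε` for all `|z| < 1/2`. -/
theorem riemann_map_close_to_id :
    ∃ C : ℝ, 0 < C ∧
      ∀ (ε : ℝ), 0 < ε → ε < 1 / 2 →
      ∀ (Ω : Set ℂ), IsOpen Ω → IsConnected Ω → SimplyConnectedSpace ↥Ω →
        (0 : ℂ) ∈ Ω → Ω ⊆ ball (0 : ℂ) 1 →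
        (frontier Ω ⊆ {z : ℂ | 1 - ε ≤ ‖z‖}) →
      ∀ (h : ℂ → ℂ), DifferentiableOn ℂ h Ω → Set.BijOn h Ω (ball (0 : ℂ) 1) →
        h 0 = 0 → (deriv h 0).im = 0 → 0 < (deriv h 0).re →
      ∀ w ∈ Ω, ‖h w‖ < 1 / 2 → ‖w - h w‖ < C * ε := by
  refine ⟨150, by norm_num, ?_⟩
  intro ε hε0 hε2 Ω hΩo hΩc _hΩsc h0Ω hΩb hfrΩ h hdiff hbij hh0 him hre w hw hhw
  have hw1 : ‖w‖ < 1 := mem_ball_zero_iff.mp (hΩb hw)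
  by_cases hεbig : (1:ℝ)/100 ≤ ε
  · calc ‖w - h w‖ ≤ ‖w‖ + ‖h w‖ := norm_sub_le _ _
      _ < 1 + 1/2 := by linarith
      _ ≤ 150 * ε := by linarith
  push_neg at hεbig
  -- ε < 1/100
  have hd0 : deriv h 0 ≠ 0 := by
    intro hz
    rw [hz] at hre
    simp at hre
  have hda : deriv h 0 = ((deriv h 0).re : ℂ) := by
    apply Complex.ext
    · simp
    · simp [him]
  have hk := aux_inv_schwarz hΩo hΩc h0Ω hΩb hdiff hbij hh0 hd0
  have habs_le : ∀ x ∈ Ω, ‖x‖ ≤ ‖h x‖ := by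
    intro x hx
    rcases eq_or_ne x 0 with rfl | hne
    · simp
    · have hkx := hk x hx
      rw [dslope_of_ne _ hne, slope_def_field, hh0, sub_zero, sub_zero, inv_div,
        norm_div] at hkx
      have hhx : h x ≠ 0 := fun hz => hne (hbij.injOn hx h0Ω (by rw [hz, hh0]))
      exact (div_le_one (norm_pos_iff.mpr hhx)).mp hkx
  have hderiv_ge : (1:ℝ) ≤ (deriv h 0).re := by
    have hk0 := hk 0 h0Ω
    rw [dslope_same, norm_inv] at hk0
    have hpos : 0 < ‖deriv h 0‖ := norm_pos_iff.mpr hd0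
    have hmm : ‖deriv h 0‖ * ‖deriv h 0‖⁻¹ = 1 := mul_inv_cancel₀ hpos.ne'
    have h1 : (1:ℝ) ≤ ‖deriv h 0‖ := by nlinarith
    rwa [hda, Complex.norm_real, Real.norm_eq_abs, abs_of_pos hre] at h1
  -- the disk of radius 1-ε is inside Ω
  have hball : ball (0:ℂ) (1-ε) ⊆ Ω := by
    have hpre : IsPreconnected (ball (0:ℂ) (1-ε)) := (convex_ball _ _).isPreconnected
    refine hpre.subset_left_of_subset_union hΩo isClosed_closure.isOpen_compl
      (disjoint_compl_right.mono_left subset_closure) ?_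
      ⟨0, mem_ball_self (by linarith), h0Ω⟩
    intro z hz
    by_cases hzc : z ∈ closure Ω
    · left
      rw [closure_eq_self_union_frontier] at hzc
      rcases hzc with hzΩ | hzf
      · exact hzΩ
      · exfalso
        have h1 := hfrΩ hzf
        simp only [mem_setOf_eq] at h1
        have h2 : ‖z‖ < 1 - ε := mem_ball_zero_iff.mp hz
        linarith
    · right; exact hzc
  set c : ℝ := 1 - ε with hcdef
  have hcpos : 0 < c := by simp only [hcdef]; linarith
  have hc1 : c ≤ 1 := by simp only [hcdef]; linarith
  have hc99 : (99:ℝ)/100 ≤ c := by simp only [hcdef]; linarith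
  have hcC : ((c:ℂ)) ≠ 0 := by
    simp only [ne_eq, Complex.ofReal_eq_zero]
    exact hcpos.ne'
  have hmul : ∀ z : ℂ, z ∈ ball (0:ℂ) 1 → (c:ℂ) * z ∈ Ω := by
    intro z hz
    apply hball
    rw [mem_ball_zero_iff] at hz ⊢
    rw [norm_mul, Complex.norm_real, Real.norm_eq_abs, abs_of_pos hcpos]
    nlinarith [norm_nonneg z]
  set G : ℂ → ℂ := fun z => h ((c:ℂ) * z) with hGdef
  have hGdiff : DifferentiableOn ℂ G (ball (0:ℂ) 1) := by
    apply DifferentiableOn.comp hdiff ((differentiable_id.const_mul _).differentiableOn)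
    intro z hz
    exact hmul z hz
  have hGmaps : MapsTo G (ball (0:ℂ) 1) (ball (0:ℂ) 1) := fun z hz => hbij.mapsTo (hmul z hz)
  have hG0 : G 0 = 0 := by simp [hGdef, hh0]
  have hGderiv : deriv G 0 = (c:ℂ) * deriv h 0 := by
    have h1 : HasDerivAt h (deriv h 0) ((c:ℂ) * 0) := by
      rw [mul_zero]
      exact (hdiff.differentiableAt (hΩo.mem_nhds h0Ω)).hasDerivAt
    have h2 : HasDerivAt (fun z : ℂ => (c:ℂ) * z) (c:ℂ) 0 := by
      simpa using (hasDerivAt_id (0:ℂ)).const_mul (c:ℂ)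
    have h3 := (h1.comp 0 h2).deriv
    rw [show (h ∘ fun z : ℂ => (c:ℂ) * z) = G from rfl] at h3
    rw [h3]; ring
  set q := dslope G 0 with hqdef
  have hqdiff : DifferentiableOn ℂ q (ball (0:ℂ) 1) :=
    (Complex.differentiableOn_dslope (ball_mem_nhds _ one_pos)).mpr hGdiff
  have hqle : ∀ z ∈ ball (0:ℂ) 1, ‖q z‖ ≤ 1 := by
    intro z hz
    have := Complex.norm_dslope_le_div_of_mapsTo_ball hGdiff (by rw [hG0]; exact hGmaps.mono_right ball_subset_closedBall) hz
    simpa using this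
  set a : ℝ := c * (deriv h 0).re with hadef
  have hq0 : q 0 = (a:ℂ) := by
    rw [hqdef, dslope_same, hGderiv, hda, hadef]
    norm_cast
  have ha0 : 0 < a := mul_pos hcpos hre
  have ha1 : a ≤ 1 := by
    have := hqle 0 (mem_ball_self one_pos)
    rw [hq0, Complex.norm_real, Real.norm_eq_abs, abs_of_pos ha0] at this
    exact this
  have hac : c ≤ a := by
    have : c * 1 ≤ c * (deriv h 0).re := by
      apply mul_le_mul_of_nonneg_left hderiv_ge hcpos.le
    simpa [hadef] using this
  clear_value c G q a
  -- now the point w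
  rcases eq_or_ne w 0 with rfl | hwne
  · rw [hh0]
    simp only [sub_zero, norm_zero]
    positivity
  have hwle : ‖w‖ ≤ ‖h w‖ := habs_le w hw
  have hwhalf : ‖w‖ < 1/2 := lt_of_le_of_lt hwle hhw
  set z : ℂ := (c:ℂ)⁻¹ * w with hzdef
  have hzn : ‖z‖ ≤ 51/100 := by
    rw [hzdef, norm_mul, norm_inv, Complex.norm_real, Real.norm_eq_abs, abs_of_pos hcpos]
    rw [inv_mul_le_iff₀ hcpos]
    nlinarith
  have hz1 : z ∈ ball (0:ℂ) 1 := by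
    rw [mem_ball_zero_iff]
    linarith
  have hzne : z ≠ 0 := by
    simp only [hzdef, mul_ne_zero_iff]
    exact ⟨inv_ne_zero hcC, hwne⟩
  have hcz : (c:ℂ) * z = w := by
    rw [hzdef, ← mul_assoc, mul_inv_cancel₀ hcC, one_mul]
  have hGz : G z = h w := by rw [hGdef]; simp only; rw [hcz]
  have hqz : h w = q z * z := by
    rw [hqdef, dslope_of_ne _ hzne, slope_def_field, hG0, sub_zero, sub_zero, hGz]
    field_simp
  clear_value z
  -- key estimate: ‖(a:ℂ) - q z‖ ≤ 3 ε
  have hδ : ‖(a:ℂ) - q z‖ ≤ 3 * ε := by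
    by_cases hqlt : ∀ y ∈ ball (0:ℂ) 1, ‖q y‖ < 1
    · -- Möbius + Schwarz
      have halt : a < 1 := by
        have := hqlt 0 (mem_ball_self one_pos)
        rwa [hq0, Complex.norm_real, Real.norm_eq_abs, abs_of_pos ha0] at this
      have hden : ∀ y ∈ ball (0:ℂ) 1, (1 - (a:ℂ) * q y) ≠ 0 := by
        intro y hy hzero
        have h1 : (a:ℂ) * q y = 1 := by
          have := sub_eq_zero.mp hzero
          linear_combination -this
        have h2 : ‖(a:ℂ) * q y‖ < 1 := by
          rw [norm_mul, Complex.norm_real, Real.norm_eq_abs, abs_of_pos ha0]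
          nlinarith [hqlt y hy, norm_nonneg (q y)]
        rw [h1] at h2
        simp at h2
      set φ : ℂ → ℂ := fun y => ((a:ℂ) - q y) / (1 - (a:ℂ) * q y) with hφdef
      clear_value φ
      have hφdiff : DifferentiableOn ℂ φ (ball (0:ℂ) 1) := by
        rw [hφdef]
        apply DifferentiableOn.div
        · exact (differentiableOn_const _).sub hqdiff
        · exact (differentiableOn_const _).sub (hqdiff.const_mul _)
        · exact hden
      have hφ0 : φ 0 = 0 := by
        rw [hφdef]
        simp only [hq0]
        rw [sub_self, zero_div]
      have hφmaps : MapsTo φ (ball (0:ℂ) 1) (ball (0:ℂ) 1) := by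
        intro y hy
        rw [mem_ball_zero_iff, hφdef]
        simp only
        rw [norm_div]
        have hnq : Complex.normSq (q y) < 1 := by
          rw [Complex.normSq_eq_norm_sq]
          nlinarith [hqlt y hy, norm_nonneg (q y)]
        have hkey : Complex.normSq ((a:ℂ) - q y) < Complex.normSq (1 - (a:ℂ) * q y) := by
          simp only [Complex.normSq_apply, Complex.sub_re, Complex.sub_im, Complex.mul_re,
            Complex.mul_im, Complex.ofReal_re, Complex.ofReal_im, Complex.one_re,
            Complex.one_im, Complex.normSq_apply] at hnq ⊢
          nlinarith [mul_pos (show (0:ℝ) < 1 - a*a by nlinarith)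
            (show (0:ℝ) < 1 - ((q y).re*(q y).re + (q y).im*(q y).im) by linarith)]
        have hdenpos : 0 < ‖1 - (a:ℂ) * q y‖ := norm_pos_iff.mpr (hden y hy)
        rw [div_lt_one hdenpos]
        have e1 : ‖(a:ℂ) - q y‖ = Real.sqrt (Complex.normSq ((a:ℂ) - q y)) := by
          rw [Complex.normSq_eq_norm_sq, Real.sqrt_sq (norm_nonneg _)]
        have e2 : ‖1 - (a:ℂ) * q y‖ = Real.sqrt (Complex.normSq (1 - (a:ℂ) * q y)) := by
          rw [Complex.normSq_eq_norm_sq, Real.sqrt_sq (norm_nonneg _)]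
        rw [e1, e2]
        exact Real.sqrt_lt_sqrt (Complex.normSq_nonneg _) hkey
      have hφle : ‖φ z‖ ≤ ‖z‖ := by
        have := Complex.dist_le_div_mul_dist_of_mapsTo_ball hφdiff (by rw [hφ0]; exact hφmaps.mono_right ball_subset_closedBall) hz1
        simpa [hφ0, dist_eq_norm] using this
      have hdenz : (1 - (a:ℂ) * q z) ≠ 0 := hden z hz1
      have hdenzpos : 0 < ‖1 - (a:ℂ) * q z‖ := norm_pos_iff.mpr hdenz
      have hδ1 : ‖(a:ℂ) - q z‖ ≤ ‖z‖ * ‖1 - (a:ℂ) * q z‖ := by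
        have := hφle
        rw [hφdef] at this
        simp only at this
        rw [norm_div, div_le_iff₀ hdenzpos] at this
        exact this
      have hden_le : ‖1 - (a:ℂ) * q z‖ ≤ (1 - a^2) + ‖(a:ℂ) - q z‖ := by
        have hsplit : (1 - (a:ℂ) * q z) = ((1 - a^2 : ℝ) : ℂ) + (a:ℂ) * ((a:ℂ) - q z) := by
          push_cast
          ring
        rw [hsplit]
        calc ‖((1 - a^2 : ℝ) : ℂ) + (a:ℂ) * ((a:ℂ) - q z)‖
            ≤ ‖((1 - a^2 : ℝ) : ℂ)‖ + ‖(a:ℂ) * ((a:ℂ) - q z)‖ := norm_add_le _ _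
          _ ≤ (1 - a^2) + ‖(a:ℂ) - q z‖ := by
              rw [Complex.norm_real, Real.norm_eq_abs, norm_mul, Complex.norm_real,
                Real.norm_eq_abs, _root_.abs_of_pos ha0,
                _root_.abs_of_nonneg (by nlinarith : (0:ℝ) ≤ 1 - a^2)]
              nlinarith [norm_nonneg ((a:ℂ) - q z)]
      have ha2e : 1 - a^2 ≤ 2*ε := by nlinarith
      nlinarith [norm_nonneg ((a:ℂ) - q z), hδ1, hden_le, hzn]
    · -- q is constant
      push_neg at hqlt
      obtain ⟨y₀, hy₀, hy₀ge⟩ := hqlt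
      have hmax : IsMaxOn (norm ∘ q) (ball (0:ℂ) 1) y₀ := by
        intro y hy
        simp only [Function.comp_apply]
        calc ‖q y‖ ≤ 1 := hqle y hy
          _ ≤ ‖q y₀‖ := hy₀ge
      have hconst := Complex.eqOn_of_isPreconnected_of_isMaxOn_norm
        (convex_ball (0:ℂ) 1).isPreconnected isOpen_ball hqdiff hy₀ hmax
      have h1 := hconst hz1
      have h2 := hconst (mem_ball_self one_pos)
      simp only [Function.const_apply] at h1 h2
      rw [h1, ← h2, hq0]
      simp only [sub_self, norm_zero]
      positivity
  -- conclude
  have hfinal : ‖w - h w‖ = ‖z‖ * ‖(c:ℂ) - q z‖ := by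
    rw [hqz, ← hcz]
    rw [show (c:ℂ) * z - q z * z = ((c:ℂ) - q z) * z by ring, norm_mul]
    ring
  have hca : ‖(c:ℂ) - q z‖ ≤ 4 * ε := by
    have hsplit : (c:ℂ) - q z = ((c - a : ℝ):ℂ) + ((a:ℂ) - q z) := by push_cast; ring
    rw [hsplit]
    calc ‖((c - a : ℝ):ℂ) + ((a:ℂ) - q z)‖ ≤ ‖((c - a : ℝ):ℂ)‖ + ‖(a:ℂ) - q z‖ :=
          norm_add_le _ _
      _ ≤ ε + 3*ε := by
          rw [Complex.norm_real, Real.norm_eq_abs]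
          have : |c - a| ≤ ε := by
            rw [abs_le]
            constructor <;> linarith [ha1, hac, hcdef.le, hcdef.ge, hε0]
          linarith
      _ = 4*ε := by ring
  rw [hfinal]
  calc ‖z‖ * ‖(c:ℂ) - q z‖ ≤ (51/100) * (4*ε) := by
        apply mul_le_mul hzn hca (norm_nonneg _) (by norm_num)
    _ < 150 * ε := by nlinarith
end

section
/- Let f and g be two bi-critical analytic circle maps that are analytically conjugate via φ (φ ∘ f = g ∘ φ) on a neighborhood U of the circle. Suppose f is cylinder renormalizable with period k and fundamental crescent C_f with C_f ∪ f(C_f) ⋐ U. Then g is cylinder renormalizable with the same period k and fundamental crescent C_g = φ(C_f), and the cylinder renormalizations satisfy f̂ ≡ ĝ. -/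
open Set Function

/-- `C` is a fundamental crescent for `f^k`, with uniformizing coordinate `Φ` realizing
the conformal isomorphism of the quotient `(C ∪ f^k(C))/f^k` with the cylinder `ℂ/ℤ`. -/
def IsFundCrescent (f : ℂ → ℂ) (k : ℕ) (C : Set ℂ) (Φ : ℂ → ℂ) : Prop :=
  IsOpen C ∧ C.Nonempty ∧
  -- `f^k` is defined and univalent on `C`:
  DifferentiableOn ℂ (f^[k]) C ∧ Set.InjOn (f^[k]) C ∧
  -- the uniformizing coordinate is analytic on `C ∪ f^k(C)`:
  DifferentiableOn ℂ Φ (C ∪ f^[k] '' C) ∧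
  -- `Φ` conjugates `f^k` to the unit translation:
  (∀ z ∈ C, Φ (f^[k] z) = Φ z + 1) ∧
  -- the quotient is the whole cylinder `ℂ/ℤ`:
  (∀ w : ℂ, ∃ z ∈ C ∪ f^[k] '' C, ∃ m : ℤ, Φ z = w + (m : ℂ)) ∧
  -- `Φ` is injective on the fundamental domain `C`:
  (∀ z ∈ C, ∀ w ∈ C, Φ z = Φ w → z = w)

/-- `fhat` (a `1`-periodic lift, i.e. a map of the cylinder `ℂ/ℤ`) is the cylinder
renormalization of `f` with period `k`, fundamental crescent `C` and coordinate `Φ`: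
it is the projection of the first-return map of `f` to `C` under `Φ`. -/
def IsCylRenorm (f : ℂ → ℂ) (k : ℕ) (C : Set ℂ) (Φ fhat : ℂ → ℂ) : Prop :=
  IsFundCrescent f k C Φ ∧
  (∀ w : ℂ, fhat (w + 1) = fhat w + 1) ∧
  ∀ z ∈ C, ∀ n : ℕ, 1 ≤ n → f^[n] z ∈ C →
    (∀ m : ℕ, 1 ≤ m → m < n → f^[m] z ∉ C) →
    ∃ j : ℤ, fhat (Φ z) = Φ (f^[n] z) + (j : ℂ)

/-- An injective holomorphic function on an open set has nonvanishing derivative. -/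
lemma deriv_ne_zero_of_injOn {φ : ℂ → ℂ} {U : Set ℂ} (hU : IsOpen U)
    (hφ : DifferentiableOn ℂ φ U) (hinj : Set.InjOn φ U) {z₀ : ℂ} (hz : z₀ ∈ U) :
    deriv φ z₀ ≠ 0 := by
  intro h0
  have hA : AnalyticAt ℂ φ z₀ := hφ.analyticOnNhd hU z₀ hz
  set F : ℂ → ℂ := fun z => φ z - φ z₀ with hFdef
  have hFA : AnalyticAt ℂ F z₀ := hA.sub analyticAt_const
  -- F is not eventually zero
  have hne : ¬ ∀ᶠ z in nhds z₀, F z = 0 := by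
    intro hev
    have h1 : ∀ᶠ z in nhdsWithin z₀ {z₀}ᶜ, F z = 0 ∧ z ∈ U :=
      Filter.Eventually.filter_mono nhdsWithin_le_nhds
        (hev.and (hU.mem_nhds hz : U ∈ nhds z₀))
    have h2 : ∀ᶠ z in nhdsWithin z₀ {z₀}ᶜ, (F z = 0 ∧ z ∈ U) ∧ z ∈ ({z₀}ᶜ : Set ℂ) :=
      h1.and (eventually_mem_nhdsWithin)
    obtain ⟨z, ⟨hz1, hz2⟩, hz3⟩ := h2.exists
    have : φ z = φ z₀ := by
      have := hz1; simpa [hFdef, sub_eq_zero] using this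
    exact hz3 (hinj hz2 hz this)
  have htop : analyticOrderAt F z₀ ≠ ⊤ := by
    intro h'
    rw [analyticOrderAt_eq_top] at h'
    exact hne h'
  obtain ⟨n, hn⟩ := WithTop.ne_top_iff_exists.mp htop
  obtain ⟨h, hhA, hh0, hFeq⟩ := (hFA.analyticOrderAt_eq_natCast (n := n)).mp hn.symm
  -- `n ≥ 2`
  have hn0 : n ≠ 0 := by
    intro h0'
    subst h0'
    have := hFeq.self_of_nhds
    simp only [hFdef, sub_self, pow_zero, one_smul] at this
    exact hh0 this.symm
  have hderivF : deriv F z₀ = 0 := by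
    have : deriv F z₀ = deriv φ z₀ := by
      simp [hFdef, deriv_sub_const]
    rw [this, h0]
  have hn1 : n ≠ 1 := by
    intro h1'
    subst h1'
    have hd1 : HasDerivAt (fun z => (z - z₀) ^ 1 • h z) (h z₀) z₀ := by
      have hd : HasDerivAt (fun z : ℂ => (z - z₀)) 1 z₀ := (hasDerivAt_id z₀).sub_const z₀
      have hdh : HasDerivAt h (deriv h z₀) z₀ := hhA.differentiableAt.hasDerivAt
      have := hd.mul hdh
      have h2 := this.congr_deriv (show 1 * h z₀ + (z₀ - z₀) * deriv h z₀ = h z₀ by ring)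
      simp only [pow_one, smul_eq_mul]
      exact h2
    have : deriv F z₀ = h z₀ := by
      rw [Filter.EventuallyEq.deriv_eq hFeq]
      exact hd1.deriv
    rw [hderivF] at this
    exact hh0 this.symm
  have hn2 : 2 ≤ n := by omega
  have hnpos : 0 < n := by omega
  have hnC : (n : ℂ) ≠ 0 := Nat.cast_ne_zero.mpr hn0
  -- n-th root of h
  obtain ⟨c, hc⟩ := IsAlgClosed.exists_pow_nat_eq (h z₀) hnpos
  have hcne : c ≠ 0 := by
    intro h'; rw [h', zero_pow hn0] at hc; exact hh0 hc.symm
  set G : ℂ → ℂ := fun z =>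
    (z - z₀) * (c * Complex.exp (Complex.log (h z / h z₀) * (n : ℂ)⁻¹)) with hGdef
  have hGA : AnalyticAt ℂ G z₀ := by
    apply (analyticAt_id.sub analyticAt_const).mul
    apply analyticAt_const.mul
    apply AnalyticAt.cexp
    apply AnalyticAt.mul _ analyticAt_const
    apply AnalyticAt.clog (hhA.div analyticAt_const hh0)
    simp [div_self hh0, Complex.one_mem_slitPlane]
  have hG0 : G z₀ = 0 := by simp [hGdef]
  -- F = G ^ n eventually
  have hGF : ∀ᶠ z in nhds z₀, F z = G z ^ n := by
    filter_upwards [hFeq, hhA.continuousAt.eventually_ne hh0] with z hz1 hz2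
    have hu : h z / h z₀ ≠ 0 := div_ne_zero hz2 hh0
    have hexp : Complex.exp (Complex.log (h z / h z₀) * (n : ℂ)⁻¹) ^ n
        = h z / h z₀ := by
      rw [← Complex.exp_nat_mul, show (n : ℂ) * (Complex.log (h z / h z₀) * (n : ℂ)⁻¹)
        = Complex.log (h z / h z₀) by field_simp, Complex.exp_log hu]
    have : G z ^ n = (z - z₀) ^ n * (c ^ n * (h z / h z₀)) := by
      rw [hGdef]; rw [mul_pow, mul_pow, hexp]
    rw [this, hc, hz1, smul_eq_mul]
    field_simp
  -- open mapping for G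
  have hGnc : ¬ ∀ᶠ z in nhds z₀, G z = G z₀ := by
    intro hev
    have h1 : ∀ᶠ z in nhdsWithin z₀ {z₀}ᶜ, G z = G z₀ ∧ z ∈ ({z₀}ᶜ : Set ℂ) :=
      (Filter.Eventually.filter_mono nhdsWithin_le_nhds hev).and eventually_mem_nhdsWithin
    obtain ⟨z, hz1, hz2⟩ := h1.exists
    rw [hG0] at hz1
    have hzne : z - z₀ ≠ 0 := sub_ne_zero.mpr hz2
    have : G z ≠ 0 := by
      simp only [hGdef]
      exact mul_ne_zero hzne (mul_ne_zero hcne (Complex.exp_ne_zero _))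
    exact this hz1
  have hmap : nhds (0 : ℂ) ≤ Filter.map G (nhds z₀) := by
    have := hGA.eventually_constant_or_nhds_le_map_nhds
    rcases this with h' | h'
    · exact absurd h' hGnc
    · rwa [hG0] at h'
  -- a good neighborhood
  have ht : {z | F z = G z ^ n} ∩ U ∈ nhds z₀ :=
    Filter.inter_mem hGF (hU.mem_nhds hz)
  have himg : G '' ({z | F z = G z ^ n} ∩ U) ∈ nhds (0 : ℂ) := by
    apply hmap
    rw [Filter.mem_map]
    exact Filter.mem_of_superset ht (Set.subset_preimage_image _ _)
  obtain ⟨δ, hδ, hball⟩ := Metric.mem_nhds_iff.mp himg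
  -- the root of unity
  set ω : ℂ := Complex.exp ((2 * Real.pi * (n : ℝ)⁻¹ : ℝ) * Complex.I) with hωdef
  have hωn : ω ^ n = 1 := by
    rw [hωdef, ← Complex.exp_nat_mul]
    have : (n : ℂ) * (((2 * Real.pi * (n : ℝ)⁻¹ : ℝ) : ℂ) * Complex.I)
        = 2 * (Real.pi : ℂ) * Complex.I := by
      push_cast
      field_simp
    rw [this, Complex.exp_two_pi_mul_I]
  have hωabs : ‖ω‖ = 1 := Complex.norm_exp_ofReal_mul_I _
  have hωne : ω ≠ 1 := by
    intro h'
    rw [hωdef, Complex.exp_eq_one_iff] at h'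
    obtain ⟨m, hm⟩ := h'
    have hm' : ((2 * Real.pi * (n : ℝ)⁻¹ : ℝ) : ℂ) * Complex.I
        = ((m * (2 * Real.pi) : ℝ) : ℂ) * Complex.I := by
      rw [hm]; push_cast; ring
    have hre : (2 * Real.pi * (n : ℝ)⁻¹ : ℝ) = (m * (2 * Real.pi) : ℝ) :=
      Complex.ofReal_inj.mp (mul_right_cancel₀ Complex.I_ne_zero hm')
    have hπ : (2 * Real.pi : ℝ) ≠ 0 := by positivity
    have hinvn : (n : ℝ)⁻¹ = (m : ℝ) := by
      apply mul_left_cancel₀ hπ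
      linear_combination hre
    have h1n : (1 : ℝ) = (m : ℝ) * n := by
      have hnR : (n : ℝ) ≠ 0 := Nat.cast_ne_zero.mpr hn0
      field_simp [hnR] at hinvn
      linarith [hinvn]
    have hint : (m * (n : ℤ) : ℤ) = 1 := by
      have : ((m * (n : ℤ) : ℤ) : ℝ) = ((1 : ℤ) : ℝ) := by push_cast; linarith
      exact_mod_cast this
    have : IsUnit ((n : ℤ)) := IsUnit.of_mul_eq_one _ (by linarith [mul_comm m (n : ℤ), hint] <;> omega)
    rcases Int.isUnit_iff.mp this with h | h <;> omega
  -- pick two preimages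
  set ε : ℂ := ((δ / 2 : ℝ) : ℂ) with hεdef
  have hεne : ε ≠ 0 := by
    simp only [hεdef, ne_eq, Complex.ofReal_eq_zero]
    positivity
  have hεmem : ε ∈ Metric.ball (0 : ℂ) δ := by
    simp only [Metric.mem_ball, dist_zero_right, hεdef, Complex.norm_real,
      Real.norm_eq_abs, abs_of_pos (by positivity : (0:ℝ) < δ / 2)]
    linarith
  have hωεmem : ω * ε ∈ Metric.ball (0 : ℂ) δ := by
    simp only [Metric.mem_ball, dist_zero_right]
    rw [norm_mul]
    simp only [hωabs, one_mul]
    simpa [Metric.mem_ball, dist_zero_right] using hεmem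
  obtain ⟨z₁, hz₁, hGz₁⟩ := hball hεmem
  obtain ⟨z₂, hz₂, hGz₂⟩ := hball hωεmem
  have hF1 : F z₁ = ε ^ n := by rw [hz₁.1, hGz₁]
  have hF2 : F z₂ = ε ^ n := by
    rw [hz₂.1, hGz₂, mul_pow, hωn, one_mul]
  have hφeq : φ z₁ = φ z₂ := by
    have h12 : φ z₁ - φ z₀ = φ z₂ - φ z₀ := hF1.trans hF2.symm
    linear_combination h12
  have hz12 : z₁ = z₂ := hinj hz₁.2 hz₂.2 hφeq
  have hωε : ω * ε = ε := by rw [← hGz₂, ← hz12, hGz₁]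
  exact hωne (mul_right_cancel₀ hεne (hωε.trans (one_mul ε).symm))

/-- An injective holomorphic map on an open set is open. -/
lemma isOpen_image_of_injOn {φ : ℂ → ℂ} {s : Set ℂ} (hs : IsOpen s)
    (hφ : DifferentiableOn ℂ φ s) (hinj : Set.InjOn φ s) : IsOpen (φ '' s) := by
  rw [isOpen_iff_mem_nhds]
  rintro _ ⟨x, hx, rfl⟩
  have hA : AnalyticAt ℂ φ x := hφ.analyticOnNhd hs x hx
  have hsd : HasStrictDerivAt φ (deriv φ x) x :=
    (hA.contDiffAt (n := 1)).hasStrictDerivAt one_ne_zero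
  have hmap : Filter.map φ (nhds x) = nhds (φ x) :=
    hsd.map_nhds_eq (deriv_ne_zero_of_injOn hs hφ hinj hx)
  rw [← hmap, Filter.mem_map]
  exact Filter.mem_of_superset (hs.mem_nhds hx) (Set.subset_preimage_image _ _)

/-- The local inverse `invFunOn φ U` of an injective holomorphic map is differentiable
at every point of the image. -/
lemma differentiableAt_invFunOn {φ : ℂ → ℂ} {U : Set ℂ} (hU : IsOpen U)
    (hφ : DifferentiableOn ℂ φ U) (hinj : Set.InjOn φ U) {z : ℂ} (hz : z ∈ U) :
    DifferentiableAt ℂ (Function.invFunOn φ U) (φ z) := by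
  have hA : AnalyticAt ℂ φ z := hφ.analyticOnNhd hU z hz
  have hsd : HasStrictDerivAt φ (deriv φ z) z :=
    (hA.contDiffAt (n := 1)).hasStrictDerivAt one_ne_zero
  have hd : deriv φ z ≠ 0 := deriv_ne_zero_of_injOn hU hφ hinj hz
  have hev : ∀ᶠ x in nhds z, Function.invFunOn φ U (φ x) = x :=
    Filter.eventually_of_mem (hU.mem_nhds hz) fun x hx => hinj.leftInvOn_invFunOn hx
  exact (hsd.to_local_left_inverse hd hev).hasDerivAt.differentiableAt

/-- **Conjugacy invariance of cylinder renormalization.**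
If `f` and `g` are analytically conjugate by `φ` (`φ ∘ f = g ∘ φ`) on a neighborhood `U`
of the circle, `f` is cylinder renormalizable with period `k` and fundamental crescent
`C_f` with `C_f ∪ f^k(C_f) ⋐ U`, then `g` is cylinder renormalizable with the same
period and fundamental crescent `C_g = φ(C_f)`, and the cylinder renormalizations agree:
`f̂ ≡ ĝ`. -/
theorem cylinder_renormalization_conjugacy_invariant
    (f g φ : ℂ → ℂ) (U : Set ℂ) (hU : IsOpen U)
    (hφan : DifferentiableOn ℂ φ U) (hφinj : Set.InjOn φ U)
    (hfan : DifferentiableOn ℂ f U) (hfU : Set.MapsTo f U U)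
    (hconj : ∀ z ∈ U, φ (f z) = g (φ z))
    (k : ℕ) (hk : 1 ≤ k) (C : Set ℂ) (Φ fhat : ℂ → ℂ)
    (hfren : IsCylRenorm f k C Φ fhat)
    (hCU : closure (C ∪ f^[k] '' C) ⊆ U) :
    IsCylRenorm g k (φ '' C) (fun w => Φ (Function.invFunOn φ U w)) fhat := by
  classical
  obtain ⟨⟨hCopen, hCne, hfkdiff, hfkinj, hΦdiff, hΦconj, hΦsurj, hΦinj⟩, hper, hret⟩ := hfren
  set ψ : ℂ → ℂ := Function.invFunOn φ U with hψdef
  set D : Set ℂ := C ∪ f^[k] '' C with hDdef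
  have hDU : D ⊆ U := subset_closure.trans hCU
  have hCsub : C ⊆ U := fun z h => hDU (Or.inl h)
  have hfkC : ∀ z ∈ C, f^[k] z ∈ U := fun z h => hDU (Or.inr ⟨z, h, rfl⟩)
  have hiter : ∀ n : ℕ, ∀ x ∈ U, f^[n] x ∈ U := fun n x hx => hfU.iterate n hx
  have hψφ : ∀ x ∈ U, ψ (φ x) = x := fun x hx => hφinj.leftInvOn_invFunOn hx
  have hconj_iter : ∀ x ∈ U, ∀ n : ℕ, φ (f^[n] x) = g^[n] (φ x) := by
    intro x hx n
    induction n with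
    | zero => simp
    | succ n ih =>
      rw [Function.iterate_succ_apply', Function.iterate_succ_apply',
        hconj (f^[n] x) (hiter n x hx), ih]
  have hgkφ : ∀ x ∈ U, g^[k] (φ x) = φ (f^[k] x) := fun x hx => (hconj_iter x hx k).symm
  have hDopen : IsOpen D := hCopen.union (isOpen_image_of_injOn hCopen hfkdiff hfkinj)
  have hψdiff : ∀ x ∈ U, DifferentiableAt ℂ ψ (φ x) := fun x hx =>
    differentiableAt_invFunOn hU hφan hφinj hx
  have hφUopen : IsOpen (φ '' U) := isOpen_image_of_injOn hU hφan hφinj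
  have hfnd : ∀ n : ℕ, ∀ x ∈ U, DifferentiableAt ℂ (f^[n]) x := by
    intro n
    induction n with
    | zero => intro x hx; simpa using differentiableAt_id'
    | succ n ih =>
      intro x hx
      have h1 : DifferentiableAt ℂ f (f^[n] x) :=
        hfan.differentiableAt (hU.mem_nhds (hiter n x hx))
      rw [Function.iterate_succ']
      exact h1.comp x (ih x hx)
  have him : g^[k] '' (φ '' C) = φ '' (f^[k] '' C) := by
    rw [Set.image_image, Set.image_image]
    exact Set.image_congr fun x hx => hgkφ x (hCsub hx)
  -- differentiability of `g^[k]` on `φ '' C`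
  have hgkdiff : DifferentiableOn ℂ (g^[k]) (φ '' C) := by
    rintro _ ⟨x, hx, rfl⟩
    apply DifferentiableAt.differentiableWithinAt
    have hxU : x ∈ U := hCsub hx
    have hd : DifferentiableAt ℂ (fun w => φ (f^[k] (ψ w))) (φ x) := by
      have h1 : DifferentiableAt ℂ ψ (φ x) := hψdiff x hxU
      have h2 : DifferentiableAt ℂ (f^[k]) (ψ (φ x)) := by
        rw [hψφ x hxU]; exact hfnd k x hxU
      have h3 : DifferentiableAt ℂ φ (f^[k] (ψ (φ x))) := by
        rw [hψφ x hxU]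
        exact hφan.differentiableAt (hU.mem_nhds (hiter k x hxU))
      exact (h3.comp _ h2).comp _ h1
    apply hd.congr_of_eventuallyEq
    apply Filter.eventually_of_mem (hφUopen.mem_nhds ⟨x, hxU, rfl⟩)
    rintro _ ⟨y, hy, rfl⟩
    beta_reduce
    rw [hψφ y hy, hgkφ y hy]
  -- differentiability of the new coordinate on `φ '' C ∪ g^[k] '' (φ '' C)`
  have hΨdiff : DifferentiableOn ℂ (fun w => Φ (ψ w)) (φ '' C ∪ g^[k] '' (φ '' C)) := by
    rw [him, ← Set.image_union]
    rintro _ ⟨x, hx, rfl⟩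
    apply DifferentiableAt.differentiableWithinAt
    have hxU : x ∈ U := hDU hx
    have h1 : DifferentiableAt ℂ ψ (φ x) := hψdiff x hxU
    have h2 : DifferentiableAt ℂ Φ (ψ (φ x)) := by
      rw [hψφ x hxU]
      exact hΦdiff.differentiableAt (hDopen.mem_nhds hx)
    exact h2.comp _ h1
  refine ⟨⟨?_, ?_, hgkdiff, ?_, hΨdiff, ?_, ?_, ?_⟩, hper, ?_⟩
  · exact isOpen_image_of_injOn hCopen (hφan.mono hCsub) (hφinj.mono hCsub)
  · exact hCne.image φ
  · -- injectivity of `g^[k]` on `φ '' C`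
    rintro _ ⟨x, hx, rfl⟩ _ ⟨y, hy, rfl⟩ h
    rw [hgkφ x (hCsub hx), hgkφ y (hCsub hy)] at h
    have := hφinj (hfkC x hx) (hfkC y hy) h
    rw [hfkinj hx hy this]
  · -- conjugation to the unit translation
    rintro _ ⟨x, hx, rfl⟩
    beta_reduce
    rw [hgkφ x (hCsub hx), hψφ (f^[k] x) (hfkC x hx), hψφ x (hCsub hx)]
    exact hΦconj x hx
  · -- surjectivity onto the cylinder
    intro w
    obtain ⟨z, hzD, m, hm⟩ := hΦsurj w
    refine ⟨φ z, ?_, m, ?_⟩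
    · rcases hzD with hz | ⟨x, hx, rfl⟩
      · exact Or.inl (Set.mem_image_of_mem φ hz)
      · exact Or.inr ⟨φ x, Set.mem_image_of_mem φ hx, hgkφ x (hCsub hx)⟩
    · beta_reduce
      rw [hψφ z (hDU hzD)]; exact hm
  · -- injectivity of the coordinate on `φ '' C`
    rintro _ ⟨x, hx, rfl⟩ _ ⟨y, hy, rfl⟩ h
    beta_reduce at h
    rw [hψφ x (hCsub hx), hψφ y (hCsub hy)] at h
    rw [hΦinj x hx y hy h]
  · -- the first-return map
    rintro _ ⟨x, hx, rfl⟩ n hn hretn hfirst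
    have hxU : x ∈ U := hCsub hx
    have hgn : ∀ m : ℕ, g^[m] (φ x) = φ (f^[m] x) := fun m => (hconj_iter x hxU m).symm
    have hfnC : f^[n] x ∈ C := by
      rw [hgn n] at hretn
      obtain ⟨y, hy, heq⟩ := hretn
      rwa [← hφinj (hCsub hy) (hiter n x hxU) heq]
    have hffirst : ∀ m : ℕ, 1 ≤ m → m < n → f^[m] x ∉ C := by
      intro m h1 h2 hmem
      exact hfirst m h1 h2 (by rw [hgn m]; exact Set.mem_image_of_mem φ hmem)
    obtain ⟨j, hj⟩ := hret x hx n hn hfnC hffirst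
    refine ⟨j, ?_⟩
    beta_reduce
    rw [hψφ x hxU, hgn n, hψφ (f^[n] x) (hiter n x hxU)]
    exact hj
end

section
/- Let μ be a Beltrami differential on the Riemann sphere, invariant under a rational map B (i.e., B*μ = μ a.e.), supported on the Julia set J(B), and let (ψ_t) for t ∈ [0,1] be the normalized solutions of ψ_t* σ₀ = tμ fixing 0, 1, ∞, depending continuously on t with ψ₀ = id. If for every t the conjugate ψ_t ∘ B ∘ ψ_t^{-1} equals B, then ψ_t fixes every point of every backward orbit set B^{-m}(x₀) for any fixed point x₀ of the identification, and hence ψ_t restricted to the closure of ∪_m B^{-m}(x₀) is the identity. -/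
open Set Filter Topology

/-- **The deformation fixes backward orbits pointwise.**
Let `B : ℂ → ℂ` and let `(ψ_t)` be a continuous family of homeomorphisms of the plane
(the normalized Ahlfors–Bers solutions of `ψ_t^*σ₀ = tμ`) with `ψ_0 = id`, each fixing
`0`, `1` and a marked point `x₀`, and each conjugating `B` to itself. If every backward
orbit set `B^{-m}(x₀)` is finite, then each `ψ_t`, `t ∈ [0,1]`, fixes every point of
every `B^{-m}(x₀)`, and hence is the identity on the closure of `⋃_m B^{-m}(x₀)`. -/
theorem deformation_fixes_backward_orbits
    (B : ℂ → ℂ) (ψ : ℝ → ℂ → ℂ) (x₀ : ℂ)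
    (hcont : Continuous fun p : ℝ × ℂ => ψ p.1 p.2)
    (hbij : ∀ t ∈ Set.Icc (0 : ℝ) 1, Function.Bijective (ψ t))
    (hψ0 : ∀ z : ℂ, ψ 0 z = z)
    (hfix0 : ∀ t ∈ Set.Icc (0 : ℝ) 1, ψ t 0 = 0)
    (hfix1 : ∀ t ∈ Set.Icc (0 : ℝ) 1, ψ t 1 = 1)
    (hfixx0 : ∀ t ∈ Set.Icc (0 : ℝ) 1, ψ t x₀ = x₀)
    -- `ψ_t ∘ B ∘ ψ_t⁻¹ = B`:
    (hconj : ∀ t ∈ Set.Icc (0 : ℝ) 1, ∀ z : ℂ, ψ t (B z) = B (ψ t z))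
    -- the backward orbit sets are finite (B is rational, `x₀` not exceptional):
    (hfin : ∀ m : ℕ, (B^[m] ⁻¹' {x₀}).Finite) :
    (∀ t ∈ Set.Icc (0 : ℝ) 1, ∀ m : ℕ, ∀ z ∈ B^[m] ⁻¹' {x₀}, ψ t z = z) ∧
    (∀ t ∈ Set.Icc (0 : ℝ) 1, ∀ z ∈ closure (⋃ m : ℕ, B^[m] ⁻¹' {x₀}), ψ t z = z) := by
  -- conjugation for iterates
  have hconjn : ∀ t ∈ Set.Icc (0:ℝ) 1, ∀ m : ℕ, ∀ z : ℂ,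
      ψ t (B^[m] z) = B^[m] (ψ t z) := by
    intro t ht m
    induction m with
    | zero => intro z; simp
    | succ n ih =>
      intro z
      rw [Function.iterate_succ_apply', Function.iterate_succ_apply', hconj t ht, ih]
  have main : ∀ t ∈ Set.Icc (0:ℝ) 1, ∀ m : ℕ, ∀ z ∈ B^[m] ⁻¹' {x₀}, ψ t z = z := by
    intro t ht m z hz
    simp only [Set.mem_preimage, Set.mem_singleton_iff] at hz
    set S := B^[m] ⁻¹' {x₀} with hS
    -- each ψ s permutes S
    have hinv : ∀ s ∈ Set.Icc (0:ℝ) 1, ψ s z ∈ S := by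
      intro s hs
      simp only [hS, Set.mem_preimage, Set.mem_singleton_iff]
      rw [← hconjn s hs, hz, hfixx0 s hs]
    have gcont : Continuous (fun s : ℝ => ψ s z) :=
      hcont.comp (continuous_id.prodMk continuous_const)
    have hfinS : (S \ {z}).Finite := (hfin m).diff
    set u : Set ℝ := (fun s : ℝ => ψ s z) ⁻¹' (S \ {z})ᶜ with hu_def
    set v : Set ℝ := (fun s : ℝ => ψ s z) ⁻¹' ({z} : Set ℂ)ᶜ with hv_def
    have hu : IsOpen u := hfinS.isClosed.isOpen_compl.preimage gcont
    have hv : IsOpen v := isClosed_singleton.isOpen_compl.preimage gcont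
    have hcover : Set.Icc (0:ℝ) 1 ⊆ u ∪ v := by
      intro s hs
      by_cases h : ψ s z = z
      · left
        simp only [hu_def, Set.mem_preimage, Set.mem_compl_iff, Set.mem_diff,
          Set.mem_singleton_iff, not_and, not_not]
        intro _; exact h
      · right
        simpa [hv_def] using h
    have hdisj : Set.Icc (0:ℝ) 1 ∩ (u ∩ v) = ∅ := by
      rw [Set.eq_empty_iff_forall_notMem]
      rintro s ⟨hs, h1, h2⟩
      simp only [hu_def, Set.mem_preimage, Set.mem_compl_iff, Set.mem_diff,
        Set.mem_singleton_iff] at h1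
      simp only [hv_def, Set.mem_preimage, Set.mem_compl_iff,
        Set.mem_singleton_iff] at h2
      exact h1 ⟨hinv s hs, h2⟩
    have hne_u : (Set.Icc (0:ℝ) 1 ∩ u).Nonempty := by
      refine ⟨0, Set.mem_Icc.mpr ⟨le_refl 0, zero_le_one⟩, ?_⟩
      simp only [hu_def, Set.mem_preimage, Set.mem_compl_iff, Set.mem_diff,
        Set.mem_singleton_iff, not_and, not_not]
      intro _; exact hψ0 z
    by_contra h
    have hne_v : (Set.Icc (0:ℝ) 1 ∩ v).Nonempty := by
      refine ⟨t, ht, ?_⟩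
      simpa [hv_def] using h
    obtain ⟨s, hs⟩ := isPreconnected_Icc u v hu hv hcover hne_u hne_v
    rw [hdisj] at hs
    exact hs
  refine ⟨main, ?_⟩
  intro t ht z hz
  have hc : IsClosed {w : ℂ | ψ t w = w} :=
    isClosed_eq (hcont.comp (continuous_const.prodMk continuous_id)) continuous_id
  have hsub : (⋃ m : ℕ, B^[m] ⁻¹' {x₀}) ⊆ {w : ℂ | ψ t w = w} := by
    intro w hw
    obtain ⟨m, hm⟩ := Set.mem_iUnion.mp hw
    exact main t ht m w hm
  exact (closure_minimal hsub hc) hz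
end

section
/- Let R ≥ 2, and let Ψ be the conformal map of ℂ_{[-1,1]} onto the unit disk 𝔻 given by Ψ = -F∘G∘F with F(z)=(1-z)/(1+z) and G the principal square root. Then the image Ψ(∂𝔻_R ∩ ℂ_{[-1,1]}) is contained in the union of the ε-neighborhoods of the points i and -i, with ε = O(1/R). -/
open Complex Set Metric

/-- The doubly slit plane `ℂ_{[-1,1]} = ℂ \ ((-∞,-1] ∪ [1,∞))`. -/
def slitPlane11 : Set ℂ :=
  {z : ℂ | z.im ≠ 0 ∨ (-1 < z.re ∧ z.re < 1)}

/-- The Möbius map `F(z) = (1-z)/(1+z)`. -/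
noncomputable def moebF (z : ℂ) : ℂ := (1 - z) / (1 + z)

/-- The principal branch of `√z` on `ℂ \ ℝ_{<0}` with `G(1) = 1`. -/
noncomputable def sqrtG (z : ℂ) : ℂ := z ^ ((1 : ℂ) / 2)

/-- The conformal map `Ψ = -F ∘ G ∘ F` of `ℂ_{[-1,1]}` onto the unit disk. -/
noncomputable def PsiUnif (z : ℂ) : ℂ := -(moebF (sqrtG (moebF z)))

/-
Write `w = G(F(z))`, so that `Ψ(z) = (w - 1)/(w + 1)` and `w² = (1 - z)/(1 + z)`. Then
`Ψ(z)² + 1 = 2(w² + 1)/(1 + w)² = 4/((1 + z)(1 + w)²)`. Since `Re w ≥ 0` we have `|1 + w| ≥ 1`,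
so `|Ψ(z) - i| · |Ψ(z) + i| ≤ 4/(|z| - 1)`; the larger of the two factors is at least `1`
because the points `±i` are `2` apart, hence the smaller one is `O(1/|z|)`.
-/

lemma sqrtG_re_nonneg (u : ℂ) : 0 ≤ (sqrtG u).re := by
  rw [sqrtG, one_div, cpow_inv_two_re]
  exact Real.sqrt_nonneg _

lemma sqrtG_sq (u : ℂ) : sqrtG u ^ 2 = u := by
  simp [sqrtG]

lemma one_le_norm_one_add_of_re_nonneg {w : ℂ} (hw : 0 ≤ w.re) : 1 ≤ ‖1 + w‖ :=
  calc (1 : ℝ) ≤ (1 + w).re := by simp [hw]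
    _ ≤ ‖1 + w‖ := re_le_norm _

lemma mul_PsiUnif_sub_I_mul_PsiUnif_add_I {z : ℂ} (hz : 1 + z ≠ 0) :
    (PsiUnif z - I) * (PsiUnif z + I) * ((1 + z) * (1 + sqrtG (moebF z)) ^ 2) = 4 := by
  set w := sqrtG (moebF z)
  have hw : 1 + w ≠ 0 := by
    intro h
    have := congrArg re h
    simp only [add_re, one_re, zero_re] at this
    linarith [sqrtG_re_nonneg (moebF z)]
  have hw2 : w ^ 2 * (1 + z) = 1 - z := by
    rw [sqrtG_sq, moebF, div_mul_cancel₀ _ hz]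
  have hpsi : PsiUnif z * (1 + w) = w - 1 := by
    rw [show PsiUnif z = -((1 - w) / (1 + w)) from rfl]
    field_simp
    ring
  linear_combination (PsiUnif z * (1 + w) + (w - 1)) * (1 + z) * hpsi + 2 * hw2
    - (1 + w) ^ 2 * (1 + z) * I_sq

lemma norm_PsiUnif_sub_I_mul_norm_PsiUnif_add_I_le {z : ℂ} (hz : 1 < ‖z‖) :
    ‖PsiUnif z - I‖ * ‖PsiUnif z + I‖ ≤ 4 / (‖z‖ - 1) := by
  have hz1 : ‖z‖ - 1 ≤ ‖1 + z‖ := by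
    simpa [add_comm] using norm_sub_norm_le z (-1)
  have hzero : 1 + z ≠ 0 := norm_pos_iff.mp (by linarith)
  have hw := one_le_norm_one_add_of_re_nonneg (sqrtG_re_nonneg (moebF z))
  have hden : ‖z‖ - 1 ≤ ‖1 + z‖ * ‖1 + sqrtG (moebF z)‖ ^ 2 := by
    nlinarith [one_le_pow₀ (n := 2) hw]
  have hprod := congrArg (‖·‖) (mul_PsiUnif_sub_I_mul_PsiUnif_add_I hzero)
  simp only [norm_mul, norm_pow, RCLike.norm_ofNat] at hprod
  rw [le_div_iff₀ (by linarith)]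
  calc ‖PsiUnif z - I‖ * ‖PsiUnif z + I‖ * (‖z‖ - 1)
      ≤ ‖PsiUnif z - I‖ * ‖PsiUnif z + I‖ * (‖1 + z‖ * ‖1 + sqrtG (moebF z)‖ ^ 2) := by
        gcongr
    _ = 4 := hprod

lemma min_norm_sub_norm_add_le_mul {E : Type*} [SeminormedAddCommGroup E] [NormedSpace ℝ E]
    (a v : E) (hv : 1 ≤ ‖v‖) : min ‖a - v‖ ‖a + v‖ ≤ ‖a - v‖ * ‖a + v‖ := by
  have hmax : ‖v‖ ≤ max ‖a - v‖ ‖a + v‖ := by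
    have h2v : 2 * ‖v‖ ≤ ‖a - v‖ + ‖a + v‖ := by
      calc 2 * ‖v‖ = ‖(a + v) - (a - v)‖ := by
            rw [show (a + v) - (a - v) = (2 : ℝ) • v by rw [two_smul]; abel, norm_smul,
              Real.norm_two]
        _ ≤ ‖a - v‖ + ‖a + v‖ := (norm_sub_le (a + v) (a - v)).trans_eq (add_comm _ _)
    rcases le_total ‖a - v‖ ‖a + v‖ with h | h <;> simp [h] <;> linarith
  rw [← min_mul_max]
  exact le_mul_of_one_le_right (le_min (norm_nonneg _) (norm_nonneg _)) (hv.trans hmax)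

/-- **`Ψ` compresses large circles toward `±i`.**
There is a constant `C` such that for all `R ≥ 2` and all `z ∈ ∂𝔻_R ∩ ℂ_{[-1,1]}`,
the image `Ψ(z)` lies within `C/R` of `i` or of `-i`. -/
theorem PsiUnif_image_of_large_circle_near_pm_i :
    ∃ C : ℝ, 0 < C ∧
      ∀ R : ℝ, 2 ≤ R → ∀ z : ℂ, ‖z‖ = R → z ∈ slitPlane11 →
        min ‖PsiUnif z - Complex.I‖
            ‖PsiUnif z + Complex.I‖ ≤ C / R := by
  refine ⟨8, by norm_num, fun R hR z hz _ => ?_⟩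
  calc min ‖PsiUnif z - I‖ ‖PsiUnif z + I‖
      ≤ ‖PsiUnif z - I‖ * ‖PsiUnif z + I‖ := min_norm_sub_norm_add_le_mul _ _ (by simp)
    _ ≤ 4 / (R - 1) := hz ▸ norm_PsiUnif_sub_I_mul_norm_PsiUnif_add_I_le (by linarith)
    _ ≤ 8 / R := by rw [div_le_div_iff₀ (by linarith) (by linarith)]; linarith
end
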